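/- arXiv:2106.06449 — 6 statements merged into one kernel-verified Lean document; each statement's English description precedes it below -/
import Mathlib

section
/- Let s and n be integers with n > 0 and s ≡ -1 (mod 4). If n is odd then v_2(S_s(n)) = 0, and if n is even then v_2(S_s(n)) = v_2(n) + v_2(s+1) - 1, where S_s(n) = ∑_{i=0}^{n-1} s^i. -/
/-!
For odd `s` every term of `S s n` is odd, so `S s n ≡ n (mod 2)`. For even `n`, multiply by
`s - 1`: `S s n * (s - 1) = s ^ n - 1`, and the lifting-the-exponent lemma at `p = 2` gives
`v₂(s ^ n - 1) + 1 = v₂(s + 1) + v₂(s - 1) + v₂(n)`. Since `s ≡ 3 (mod 4)` forces `v₂(s - 1) = 1`,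
this is `v₂(S s n) + 1 = v₂(s + 1) + v₂(n)`.
-/

/-- `S s n = ∑_{i=0}^{n-1} s^i`. -/
def S (s : ℤ) (n : ℕ) : ℤ := ∑ i ∈ Finset.range n, s ^ i

theorem Int.geom_sum_modEq_card {m s : ℤ} (hs : s ≡ 1 [ZMOD m]) (n : ℕ) :
    ∑ i ∈ Finset.range n, s ^ i ≡ n [ZMOD m] := by
  simpa using Int.ModEq.sum (s := Finset.range n) fun i _ => hs.pow i

theorem Int.two_dvd_geom_sum_iff {s : ℤ} (hs : Odd s) (n : ℕ) :
    2 ∣ ∑ i ∈ Finset.range n, s ^ i ↔ 2 ∣ (n : ℤ) :=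
  (Int.geom_sum_modEq_card (Int.odd_iff.mp hs) n).dvd_iff

theorem Int.emultiplicity_two_sub_one_of_four_dvd_add_one {s : ℤ} (hs : 4 ∣ s + 1) :
    emultiplicity 2 (s - 1) = 1 := by
  rw [← Nat.cast_one (R := ℕ∞), emultiplicity_eq_coe]
  omega

theorem Int.emultiplicity_two_geom_sum_add_one {s : ℤ} (hs : 4 ∣ s + 1) {n : ℕ} (hn : Even n) :
    emultiplicity 2 (∑ i ∈ Finset.range n, s ^ i) + 1 =
      emultiplicity 2 (s + 1) + emultiplicity (2 : ℤ) n := by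
  have hs_sub : emultiplicity 2 (s - 1) = 1 := Int.emultiplicity_two_sub_one_of_four_dvd_add_one hs
  have hlte := Int.two_pow_sub_pow (x := s) (y := 1) (by omega) (by omega) hn
  rw [one_pow, ← geom_sum_mul, emultiplicity_mul Int.prime_two, hs_sub] at hlte
  rw [add_right_comm (emultiplicity 2 (s + 1))] at hlte
  exact WithTop.add_right_cancel ENat.one_ne_top hlte

theorem stmt7_general (s : ℤ) (n : ℕ) (hs : (4 : ℤ) ∣ s + 1) :
    (Odd n → emultiplicity (2 : ℤ) (S s n) = 0) ∧
    (Even n → emultiplicity (2 : ℤ) (S s n) =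
      emultiplicity (2 : ℤ) (n : ℤ) + emultiplicity (2 : ℤ) (s + 1) - 1) := by
  have hs_odd : Odd s := by rw [Int.odd_iff]; omega
  refine ⟨fun hn => ?_, fun hn => ?_⟩
  · rw [emultiplicity_eq_zero, S, Int.two_dvd_geom_sum_iff hs_odd, ← even_iff_two_dvd,
      Int.even_coe_nat, Nat.not_even_iff_odd]
    exact hn
  · rw [add_comm]
    exact (ENat.addLECancellable_natCast 1).eq_tsub_of_add_eq
      (Int.emultiplicity_two_geom_sum_add_one hs hn)

theorem stmt7 (s : ℤ) (n : ℕ) (hn : 0 < n) (hs : (4 : ℤ) ∣ s + 1) :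
    (Odd n → emultiplicity (2 : ℤ) (S s n) = 0) ∧
    (Even n → emultiplicity (2 : ℤ) (S s n) =
      emultiplicity (2 : ℤ) (n : ℤ) + emultiplicity (2 : ℤ) (s + 1) - 1) :=
  stmt7_general s n hs
end

section
/- Let s be an integer with s ≡ -1 (mod 4) and let n ≥ 2 be an integer. Then the multiplicative order of s modulo 2^n equals 2^{max(1, n - v_2(s+1))}. -/
/-!
By the lifting-the-exponent lemma for `p = 2`, `v₂(s ^ 2 ^ e - 1) = v₂(s + 1) + e` for `e ≥ 1`, so
`s ^ 2 ^ e ≡ 1 (mod 2 ^ n)` exactly when `n - v₂(s + 1) ≤ e`. Since `s ≡ -1 (mod 4)`, `s` itself is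
not `1` modulo `2 ^ n`, and the order is the least such power `2 ^ e` with `e ≥ 1`.
-/

theorem orderOf_eq_two_pow_max_one {M : Type*} [Monoid M] {x : M} {t : ℕ} (hx : x ≠ 1)
    (h : ∀ e, 1 ≤ e → (x ^ 2 ^ e = 1 ↔ t ≤ e)) : orderOf x = 2 ^ max 1 t := by
  obtain ⟨m, hm⟩ : ∃ m, max 1 t = m + 1 := ⟨max 1 t - 1, by omega⟩
  rw [hm]
  refine orderOf_eq_prime_pow ?_ ((h _ (by omega)).2 (by omega))
  rcases m with _ | m
  · simpa using hx
  · rw [h _ (by omega)]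
    omega

theorem ENat.toNat_natCast_sub_le_iff {n k : ℕ} {v : ℕ∞} :
    ((n : ℕ∞) - v).toNat ≤ k ↔ (n : ℕ∞) ≤ v + k := by
  induction v using ENat.recTopCoe with
  | top => simp
  | coe w =>
    rw [← ENat.natCast_sub, ENat.toNat_natCast]
    norm_cast
    omega

theorem ZMod.intCast_pow_eq_one_iff_dvd {m : ℕ} {s : ℤ} {k : ℕ} :
    (s : ZMod m) ^ k = 1 ↔ (m : ℤ) ∣ s ^ k - 1 := by
  rw [← ZMod.intCast_eq_intCast_iff_dvd_sub, Int.cast_pow, Int.cast_one, eq_comm]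

theorem Int.emultiplicity_two_pow_two_pow_sub_one {s : ℤ} (hs : 4 ∣ s + 1) {e : ℕ} (he : 1 ≤ e) :
    emultiplicity 2 (s ^ 2 ^ e - 1) = emultiplicity 2 (s + 1) + e := by
  have hodd : ¬ 2 ∣ s := by omega
  have := Int.two_pow_two_pow_sub_pow_two_pow e (y := -1) (by simpa using hs) hodd
  rwa [Even.neg_one_pow (Nat.even_pow.mpr ⟨even_two, by omega⟩), sub_neg_eq_add] at this

theorem ZMod.intCast_pow_two_pow_eq_one_iff {s : ℤ} (hs : 4 ∣ s + 1) {n e : ℕ} (he : 1 ≤ e) :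
    (s : ZMod (2 ^ n)) ^ 2 ^ e = 1 ↔ (n : ℕ∞) ≤ emultiplicity 2 (s + 1) + e := by
  rw [ZMod.intCast_pow_eq_one_iff_dvd, Nat.cast_pow, Nat.cast_ofNat,
    pow_dvd_iff_le_emultiplicity, Int.emultiplicity_two_pow_two_pow_sub_one hs he]

theorem ZMod.intCast_ne_one_of_four_dvd_add_one {s : ℤ} (hs : 4 ∣ s + 1) {n : ℕ} (hn : 2 ≤ n) :
    (s : ZMod (2 ^ n)) ≠ 1 := by
  intro h
  have h4 : (4 : ℤ) ∣ 1 - s := by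
    rw [← Int.cast_one, ZMod.intCast_eq_intCast_iff_dvd_sub] at h
    exact (pow_dvd_pow (2 : ℤ) hn).trans (by exact_mod_cast h)
  omega

/-- The subtraction is taken in `ℕ∞`, so `n - ⊤ = 0` when `s = -1`. -/
theorem stmt8 (s : ℤ) (n : ℕ) (hn : 2 ≤ n) (hs : (4 : ℤ) ∣ s + 1) :
    orderOf ((s : ZMod (2 ^ n))) =
      2 ^ (max 1 (((n : ℕ∞) - emultiplicity (2 : ℤ) (s + 1)).toNat)) := by
  refine orderOf_eq_two_pow_max_one (ZMod.intCast_ne_one_of_four_dvd_add_one hs hn) fun e he => ?_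
  rw [ZMod.intCast_pow_two_pow_eq_one_iff hs he, ENat.toNat_natCast_sub_le_iff]
end

section
/- Let p be an odd prime, let m, a, n be positive integers with a = v_p(s - 1) < m for an integer s ≡ 1 (mod p), and suppose p^{m-a} divides n or p^{m-a} divides n - 1. Then S_s(n) ≡ n (mod p^m), where S_s(n) = ∑_{i=0}^{n-1} s^i. -/
open Finset

theorem S_succ (s : ℤ) (n : ℕ) : S s (n + 1) = S s n + s ^ n := sum_range_succ _ _

theorem S_add (s : ℤ) (k l : ℕ) : S s (k + l) = S s k + s ^ k * S s l := by
  simp only [S, sum_range_add, pow_add, mul_sum]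

theorem S_mul (s : ℤ) (k q : ℕ) : S s (k * q) = S s k * S (s ^ k) q := by
  induction q with
  | zero => simp [S]
  | succ q ih =>
    rw [Nat.mul_succ, S_add, ih, S_succ, ← pow_mul]
    ring

theorem S_mul_sub_one (s : ℤ) (n : ℕ) : S s n * (s - 1) = s ^ n - 1 := geom_sum_mul s n

theorem S_sub_eq_sum_S_mul (s : ℤ) (n : ℕ) :
    S s n - n = (∑ j ∈ range n, S s j) * (s - 1) := by
  rw [sum_mul]
  simp only [S_mul_sub_one, sum_sub_distrib]
  simp [S]

theorem S_modEq_of_modEq_one {M s : ℤ} (h : s ≡ 1 [ZMOD M]) (n : ℕ) : S s n ≡ n [ZMOD M] := by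
  simpa [S] using Int.ModEq.sum (s := range n) fun i _ => h.pow i

theorem dvd_sum_range_id_of_odd {n : ℕ} (hn : Odd n) : n ∣ ∑ i ∈ range n, i := by
  obtain ⟨k, rfl⟩ := hn
  rw [sum_range_id, Nat.add_sub_cancel, mul_left_comm, Nat.mul_div_cancel_left _ two_pos]
  exact dvd_mul_right _ _

theorem dvd_sum_range_S_of_odd {n : ℕ} (hn : Odd n) {u : ℤ} (hu : (n : ℤ) ∣ u - 1) :
    (n : ℤ) ∣ ∑ j ∈ range n, S u j := by
  have hsum : ∑ j ∈ range n, S u j ≡ ∑ j ∈ range n, (j : ℤ) [ZMOD n] :=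
    Int.ModEq.sum fun j _ => S_modEq_of_modEq_one (Int.modEq_iff_dvd.2 hu).symm j
  rw [hsum.dvd_iff]
  simpa using Int.natCast_dvd_natCast.2 (dvd_sum_range_id_of_odd hn)

theorem pow_succ_dvd_S_sub_of_pow_dvd_sub_one {p c : ℕ} (hp : Odd p) (hc : 0 < c) {u : ℤ}
    (hu : (p : ℤ) ^ c ∣ u - 1) : (p : ℤ) ^ (c + 1) ∣ S u p - p := by
  rw [S_sub_eq_sum_S_mul, pow_succ']
  exact mul_dvd_mul (dvd_sum_range_S_of_odd hp ((dvd_pow_self _ hc.ne').trans hu)) hu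

theorem pow_add_dvd_pow_sub_one_of_dvd_S_sub {p a k : ℕ} {s : ℤ} (hs : (p : ℤ) ^ a ∣ s - 1)
    (hS : (p : ℤ) ^ (a + k) ∣ S s (p ^ k) - (p : ℤ) ^ k) :
    (p : ℤ) ^ (a + k) ∣ s ^ p ^ k - 1 := by
  have hpk : (p : ℤ) ^ k ∣ S s (p ^ k) :=
    dvd_sub_self_right.1 ((pow_dvd_pow _ (k.le_add_left a)).trans hS)
  rw [← S_mul_sub_one, pow_add, mul_comm]
  exact mul_dvd_mul hpk hs

theorem pow_add_dvd_S_pow_sub {p a : ℕ} (hp : Odd p) (ha : 0 < a) {s : ℤ}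
    (hs : (p : ℤ) ^ a ∣ s - 1) (k : ℕ) : (p : ℤ) ^ (a + k) ∣ S s (p ^ k) - (p : ℤ) ^ k := by
  induction k with
  | zero => simp [S]
  | succ k ih =>
    set u := s ^ p ^ k
    have hu : (p : ℤ) ^ (a + k + 1) ∣ S u p - p :=
      pow_succ_dvd_S_sub_of_pow_dvd_sub_one hp (by omega)
        (pow_add_dvd_pow_sub_one_of_dvd_S_sub hs ih)
    have hpu : (p : ℤ) ∣ S u p :=
      dvd_sub_self_right.1 ((dvd_pow_self _ (by omega)).trans hu)
    have hsplit : S s (p ^ (k + 1)) - (p : ℤ) ^ (k + 1) =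
        (S s (p ^ k) - (p : ℤ) ^ k) * S u p + (p : ℤ) ^ k * (S u p - p) := by
      rw [pow_succ, S_mul]
      ring
    rw [hsplit, ← add_assoc, pow_succ]
    exact dvd_add (mul_dvd_mul ih hpu) (hu.mul_left _)

theorem S_mul_modEq {M s : ℤ} {N : ℕ} (hS : S s N ≡ N [ZMOD M]) (hs : s ^ N ≡ 1 [ZMOD M])
    (q : ℕ) : S s (N * q) ≡ (N * q : ℕ) [ZMOD M] := by
  rw [S_mul, Nat.cast_mul]
  exact hS.mul (S_modEq_of_modEq_one hs q)

theorem S_mul_add_one_modEq {M s : ℤ} {N : ℕ} (hS : S s N ≡ N [ZMOD M])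
    (hs : s ^ N ≡ 1 [ZMOD M]) (q : ℕ) : S s (N * q + 1) ≡ (N * q + 1 : ℕ) [ZMOD M] := by
  rw [S_succ, pow_mul, Nat.cast_succ]
  exact (S_mul_modEq hS hs q).add (by simpa using hs.pow q)

theorem stmt9_general (p : ℕ) (hp : p.Prime) (hodd : p ≠ 2) (m a n : ℕ)
    (ha : 0 < a) (s : ℤ)
    (hva : emultiplicity (p : ℤ) (s - 1) = a)
    (hdiv : (p ^ (m - a) : ℕ) ∣ n ∨ (p ^ (m - a) : ℕ) ∣ n - 1) :
    S s n ≡ (n : ℤ) [ZMOD (p : ℤ) ^ m] := by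
  have hs : (p : ℤ) ^ a ∣ s - 1 := pow_dvd_of_le_emultiplicity hva.ge
  have hS := pow_add_dvd_S_pow_sub (hp.odd_of_ne_two hodd) ha hs (m - a)
  have hSN : S s (p ^ (m - a)) ≡ (p ^ (m - a) : ℕ) [ZMOD (p : ℤ) ^ (a + (m - a))] :=
    (Int.modEq_iff_dvd.2 (by simpa using hS)).symm
  have hsN : s ^ p ^ (m - a) ≡ 1 [ZMOD (p : ℤ) ^ (a + (m - a))] :=
    (Int.modEq_iff_dvd.2 (pow_add_dvd_pow_sub_one_of_dvd_S_sub hs hS)).symm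
  refine Int.ModEq.of_dvd (pow_dvd_pow _ (by omega : m ≤ a + (m - a))) ?_
  rcases hdiv with ⟨q, rfl⟩ | ⟨q, hq⟩
  · exact S_mul_modEq hSN hsN q
  · obtain _ | n := n
    · rfl
    · rw [Nat.add_sub_cancel] at hq
      rw [hq]
      exact S_mul_add_one_modEq hSN hsN q

theorem stmt9 (p : ℕ) (hp : p.Prime) (hodd : p ≠ 2) (m a n : ℕ)
    (hm : 0 < m) (ha : 0 < a) (hn : 0 < n) (s : ℤ) (hs : (p : ℤ) ∣ s - 1)
    (hva : emultiplicity (p : ℤ) (s - 1) = a) (ham : a < m)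
    (hdiv : (p ^ (m - a) : ℕ) ∣ n ∨ (p ^ (m - a) : ℕ) ∣ n - 1) :
    S s n ≡ (n : ℤ) [ZMOD (p : ℤ) ^ m] :=
  stmt9_general p hp hodd m a n ha s hva hdiv
end

section
/- Let m ≥ 2 and s be an integer with v_2(s-1) = 1 (i.e. s ≡ 3 mod 4). If n is a positive integer with n ≡ 0 (mod 2^{m-1}), then S_s(n) ≡ 0 (mod 2^m); and if n ≡ 1 (mod 2^{m-1}), then S_s(n) ≡ 1 (mod 2^m), where S_s(n) = ∑_{i=0}^{n-1} s^i. -/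
open Finset

theorem geom_sum_two_mul {R : Type*} [CommSemiring R] (x : R) (n : ℕ) :
    ∑ i ∈ range (2 * n), x ^ i = (1 + x) * ∑ i ∈ range n, (x ^ 2) ^ i := by
  induction n with
  | zero => simp
  | succ n ih =>
    rw [Nat.mul_succ, sum_range_succ, sum_range_succ, ih, sum_range_succ, ← pow_mul]
    ring

theorem S_two_mul (s : ℤ) (n : ℕ) : S s (2 * n) = (1 + s) * S (s ^ 2) n :=
  geom_sum_two_mul s n

theorem two_pow_dvd_S_two_pow_mul {s : ℤ} (hs : Odd s) (a k : ℕ) : 2 ^ a ∣ S s (2 ^ a * k) := by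
  induction a generalizing s with
  | zero => simp
  | succ a ih =>
    rw [pow_succ' (2 : ℕ), mul_assoc, S_two_mul, pow_succ']
    exact mul_dvd_mul (by simpa [add_comm] using hs.add_one.two_dvd) (ih hs.pow)

theorem two_pow_add_two_dvd_S_two_pow_succ_mul {s : ℤ} (hs : 4 ∣ s + 1) (a k : ℕ) :
    2 ^ (a + 2) ∣ S s (2 ^ (a + 1) * k) := by
  have hodd : Odd s := by
    rw [Int.odd_iff]
    omega
  rw [pow_succ' (2 : ℕ), mul_assoc, S_two_mul, pow_add, mul_comm]
  exact mul_dvd_mul (by simpa [add_comm] using hs) (two_pow_dvd_S_two_pow_mul hodd.pow a k)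

theorem four_dvd_add_one_of_emultiplicity_sub_one {s : ℤ} (hs : emultiplicity (2 : ℤ) (s - 1) = 1) :
    4 ∣ s + 1 := by
  obtain ⟨h2, h4⟩ := emultiplicity_eq_coe.mp (by exact_mod_cast hs)
  norm_num at h2 h4
  omega

theorem stmt10_general (m : ℕ) (hm : 2 ≤ m) (s : ℤ) (hs : emultiplicity (2 : ℤ) (s - 1) = 1)
    (n : ℕ) :
    ((2 ^ (m - 1) : ℕ) ∣ n → S s n ≡ 0 [ZMOD (2 : ℤ) ^ m]) ∧
    (n ≡ 1 [MOD 2 ^ (m - 1)] → S s n ≡ 1 [ZMOD (2 : ℤ) ^ m]) := by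
  obtain ⟨a, rfl⟩ : ∃ a, m = a + 2 := ⟨m - 2, by omega⟩
  have hdvd (k : ℕ) : (2 : ℤ) ^ (a + 2) ∣ S s (2 ^ (a + 1) * k) :=
    two_pow_add_two_dvd_S_two_pow_succ_mul (four_dvd_add_one_of_emultiplicity_sub_one hs) a k
  rw [show a + 2 - 1 = a + 1 from rfl]
  refine ⟨fun ⟨k, hk⟩ ↦ ?_, fun hn ↦ ?_⟩
  · rw [hk]
    exact Int.modEq_zero_iff_dvd.mpr (hdvd k)
  · have hmod : n % 2 ^ (a + 1) = 1 :=
      (show n % _ = 1 % _ from hn).trans (Nat.mod_eq_of_lt (Nat.one_lt_two_pow (Nat.succ_ne_zero a)))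
    rw [← Nat.div_add_mod n (2 ^ (a + 1)), hmod, S, geom_sum_succ, ← S]
    simpa using ((Int.modEq_zero_iff_dvd.mpr (hdvd _)).mul_left s).add_right 1

theorem stmt10 (m : ℕ) (hm : 2 ≤ m) (s : ℤ) (hs : emultiplicity (2 : ℤ) (s - 1) = 1)
    (n : ℕ) (hn : 0 < n) :
    ((2 ^ (m - 1) : ℕ) ∣ n → S s n ≡ 0 [ZMOD (2 : ℤ) ^ m]) ∧
    (n ≡ 1 [MOD 2 ^ (m - 1)] → S s n ≡ 1 [ZMOD (2 : ℤ) ^ m]) :=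
  stmt10_general m hm s hs n
end

section
/- Let p be an odd prime, let s, t be integers with s ≡ t ≡ 1 (mod p), and let n be a positive integer. Then S_{s,t}(p^n) ≡ 0 (mod p^n), where S_{s,t}(N) = ∑_{0 ≤ i < j < N} s^i t^j. -/
/-!
Cutting `[0, a N)` into `a` blocks of length `N` gives
`S_{s,t}(a N) = S_{s^N,t^N}(a) G_N(s) G_N(t) + G_a((s t)^N) S_{s,t}(N)`,
where `G_N(x) = ∑_{i<N} x^i`. For `x ≡ 1 (mod p)` one has `p ∣ G_p(x)`, hence `p^m ∣ G_{p^m}(x)`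
by the same block decomposition, and `S_{s,t}(p) ≡ S_{1,1}(p) = p (p - 1) / 2 ≡ 0 (mod p)`
because `p` is odd. Taking `N = p^m`, `a = p`, both terms are divisible by `p^{m+1}`, and
induction on `m` gives the claim.
-/

open Finset

/-- `S2 s t N = ∑_{0 ≤ i < j < N} s^i t^j`. -/
def S2 (s t : ℤ) (N : ℕ) : ℤ := ∑ j ∈ Finset.range N, ∑ i ∈ Finset.range j, s ^ i * t ^ j

section GeomSum

variable {R : Type*}

theorem geom_sum_range_add [Semiring R] (x : R) (m n : ℕ) :
    ∑ i ∈ range (m + n), x ^ i = ∑ i ∈ range m, x ^ i + x ^ m * ∑ i ∈ range n, x ^ i := by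
  simp only [sum_range_add, pow_add, mul_sum]

theorem geom_sum_range_mul [CommSemiring R] (x : R) (a n : ℕ) :
    ∑ i ∈ range (a * n), x ^ i = (∑ b ∈ range a, (x ^ n) ^ b) * ∑ i ∈ range n, x ^ i := by
  induction a with
  | zero => simp
  | succ a ih => rw [Nat.succ_mul, geom_sum_range_add, ih, sum_range_succ, pow_mul']; ring

theorem natCast_dvd_geom_sum [CommRing R] {p : ℕ} {x : R} (hx : (p : R) ∣ x - 1) :
    (p : R) ∣ ∑ i ∈ range p, x ^ i := by
  simpa using dvd_geom_sum₂_self hx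

theorem pow_dvd_geom_sum_pow [CommRing R] {p : ℕ} {x : R} (hx : (p : R) ∣ x - 1) (m : ℕ) :
    (p : R) ^ m ∣ ∑ i ∈ range (p ^ m), x ^ i := by
  induction m with
  | zero => simp
  | succ m ih =>
    rw [pow_succ' p, geom_sum_range_mul, pow_succ' (p : R)]
    exact mul_dvd_mul (natCast_dvd_geom_sum (hx.trans (sub_one_dvd_pow_sub_one x _))) ih

end GeomSum

theorem S2_eq_sum_geom_sum_mul (s t : ℤ) (N : ℕ) :
    S2 s t N = ∑ j ∈ range N, (∑ i ∈ range j, s ^ i) * t ^ j := by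
  simp only [S2, sum_mul]

theorem S2_succ (s t : ℤ) (N : ℕ) :
    S2 s t (N + 1) = S2 s t N + (∑ i ∈ range N, s ^ i) * t ^ N := by
  simp only [S2_eq_sum_geom_sum_mul, sum_range_succ]

theorem S2_add (s t : ℤ) (m n : ℕ) :
    S2 s t (m + n) = S2 s t m + (∑ i ∈ range m, s ^ i) * t ^ m * ∑ j ∈ range n, t ^ j
      + (s * t) ^ m * S2 s t n := by
  have hblock : ∀ j, (∑ i ∈ range (m + j), s ^ i) * t ^ (m + j) =
      (∑ i ∈ range m, s ^ i) * t ^ m * t ^ j + (s * t) ^ m * ((∑ i ∈ range j, s ^ i) * t ^ j) := by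
    intro j
    rw [geom_sum_range_add, pow_add, mul_pow]
    ring
  simp only [S2_eq_sum_geom_sum_mul]
  rw [sum_range_add]
  simp only [hblock, sum_add_distrib, ← mul_sum]
  ring

theorem S2_mul (s t : ℤ) (a n : ℕ) :
    S2 s t (a * n) = S2 (s ^ n) (t ^ n) a * ((∑ i ∈ range n, s ^ i) * ∑ j ∈ range n, t ^ j)
      + (∑ b ∈ range a, ((s * t) ^ n) ^ b) * S2 s t n := by
  induction a with
  | zero => simp [S2]
  | succ a ih =>
    rw [Nat.succ_mul, S2_add, ih, geom_sum_range_mul, S2_succ, sum_range_succ, pow_mul', pow_mul']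
    ring

theorem S2_modEq {m s s' t t' : ℤ} (hs : s ≡ s' [ZMOD m]) (ht : t ≡ t' [ZMOD m]) (N : ℕ) :
    S2 s t N ≡ S2 s' t' N [ZMOD m] :=
  Int.ModEq.sum fun j _ => Int.ModEq.sum fun i _ => (hs.pow i).mul (ht.pow j)

theorem dvd_S2_self {p : ℕ} (hp : Odd p) {s t : ℤ} (hs : (p : ℤ) ∣ s - 1)
    (ht : (p : ℤ) ∣ t - 1) : (p : ℤ) ∣ S2 s t p := by
  have hS2_one : S2 1 1 p = ((∑ j ∈ range p, j : ℕ) : ℤ) := by simp [S2]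
  have hsum : p ∣ ∑ j ∈ range p, j := by
    obtain ⟨k, rfl⟩ := hp
    have h := sum_range_id_mul_two (2 * k + 1)
    exact ⟨k, by simp only [Nat.add_sub_cancel] at h; linarith⟩
  have hmod := S2_modEq (Int.modEq_iff_dvd.2 hs).symm (Int.modEq_iff_dvd.2 ht).symm p
  rw [hS2_one] at hmod
  exact (Int.ModEq.dvd_iff hmod).2 (Int.natCast_dvd_natCast.2 hsum)

theorem pow_dvd_S2_pow {p : ℕ} (hp : Odd p) {s t : ℤ} (hs : (p : ℤ) ∣ s - 1)
    (ht : (p : ℤ) ∣ t - 1) (n : ℕ) : (p : ℤ) ^ n ∣ S2 s t (p ^ n) := by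
  induction n with
  | zero => simp [S2]
  | succ n ih =>
    have hst : (p : ℤ) ∣ s * t - 1 := by
      simpa only [sub_mul, one_mul, sub_add_sub_cancel] using dvd_add (hs.mul_right t) ht
    have hblocks : (p : ℤ) ∣ S2 (s ^ p ^ n) (t ^ p ^ n) p :=
      dvd_S2_self hp (hs.trans (sub_one_dvd_pow_sub_one _ _))
        (ht.trans (sub_one_dvd_pow_sub_one _ _))
    have hweights : (p : ℤ) ∣ ∑ b ∈ range p, ((s * t) ^ p ^ n) ^ b :=
      natCast_dvd_geom_sum (hst.trans (sub_one_dvd_pow_sub_one _ _))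
    rw [pow_succ' p, S2_mul, pow_succ' (p : ℤ)]
    exact dvd_add (mul_dvd_mul hblocks ((pow_dvd_geom_sum_pow hs n).mul_right _))
      (mul_dvd_mul hweights ih)

theorem stmt11_general (p : ℕ) (hp : p.Prime) (hodd : p ≠ 2) (s t : ℤ)
    (hs : (p : ℤ) ∣ s - 1) (ht : (p : ℤ) ∣ t - 1) (n : ℕ) :
    S2 s t (p ^ n) ≡ 0 [ZMOD (p : ℤ) ^ n] :=
  Int.modEq_zero_iff_dvd.2 (pow_dvd_S2_pow (hp.odd_of_ne_two hodd) hs ht n)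

theorem stmt11 (p : ℕ) (hp : p.Prime) (hodd : p ≠ 2) (s t : ℤ)
    (hs : (p : ℤ) ∣ s - 1) (ht : (p : ℤ) ∣ t - 1) (n : ℕ) (hn : 0 < n) :
    S2 s t (p ^ n) ≡ 0 [ZMOD (p : ℤ) ^ n] :=
  stmt11_general p hp hodd s t hs ht n
end

section
/- Let m be a positive integer, and let s₁, s₂ be integers with s₁ ≡ -1 (mod 4) and s₂ odd. Set o₁ = max(0, m - v_2(s₁+1)) and o₂ = max(0, m - v_2(s₂-1)). If n is a positive integer with max(o₁, o₂) ≤ n - 1, then S_{s₁,s₂}(2^n) ≡ 2^{n-1} (mod 2^m). -/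
open Finset

theorem pow_tsub_dvd_of_tsub_emultiplicity_le {α : Type*} [Monoid α] {a b : α} {m d : ℕ}
    (h : (m : ℕ∞) - emultiplicity a b ≤ d) : a ^ (m - d) ∣ b :=
  pow_dvd_of_le_emultiplicity <| by rwa [ENat.natCast_sub, tsub_le_iff_tsub_le]

theorem geom_sum_range_two_mul {R : Type*} [Semiring R] (x : R) (N : ℕ) :
    ∑ i ∈ range (2 * N), x ^ i = (x + 1) * ∑ i ∈ range N, (x ^ 2) ^ i := by
  induction N with
  | zero => simp
  | succ N ih =>
    rw [Nat.mul_succ, sum_range_succ, sum_range_succ, ih, sum_range_succ, ← pow_mul,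
      pow_succ' x (2 * N)]
    noncomm_ring

theorem two_pow_dvd_geom_sum_two_pow {t : ℤ} (ht : Odd t) (k : ℕ) :
    (2 : ℤ) ^ k ∣ ∑ i ∈ range (2 ^ k), t ^ i := by
  induction k generalizing t with
  | zero => simp
  | succ k ih =>
    rw [pow_succ' (2 : ℕ), geom_sum_range_two_mul, pow_succ']
    exact mul_dvd_mul ht.add_one.two_dvd (ih ht.pow)

theorem two_pow_add_dvd_geom_sum_two_pow_succ {s : ℤ} {c : ℕ} (hs : Odd s)
    (hsc : (2 : ℤ) ^ c ∣ s + 1) (k : ℕ) :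
    (2 : ℤ) ^ (c + k) ∣ ∑ i ∈ range (2 ^ (k + 1)), s ^ i := by
  rw [pow_succ' (2 : ℕ), geom_sum_range_two_mul, pow_add]
  exact mul_dvd_mul hsc (two_pow_dvd_geom_sum_two_pow hs.pow k)

theorem two_pow_succ_dvd_pow_two_pow_succ_sub_one {w : ℤ} {c : ℕ} (hw : Odd w)
    (hwc : (2 : ℤ) ^ c ∣ w + 1) (k : ℕ) :
    (2 : ℤ) ^ (c + 1) ∣ w ^ 2 ^ (k + 1) - 1 := by
  have hsq : (2 : ℤ) ^ (c + 1) ∣ w ^ 2 - 1 := by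
    rw [pow_succ, show w ^ 2 - 1 = (w + 1) * (w - 1) by ring]
    exact mul_dvd_mul hwc (hw.sub_odd odd_one).two_dvd
  rw [pow_succ' (2 : ℕ), pow_mul]
  simpa using hsq.trans (sub_dvd_pow_sub_pow (w ^ 2) 1 (2 ^ k))

theorem S2_two_mul (s t : ℤ) (N : ℕ) :
    S2 s t (2 * N) = (1 + (s * t) ^ N) * S2 s t N
      + t ^ N * ((∑ i ∈ range N, s ^ i) * ∑ j ∈ range N, t ^ j) := by
  have hshift : ∀ j ∈ range N, (∑ i ∈ range (N + j), s ^ i) * t ^ (N + j)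
      = t ^ N * (∑ i ∈ range N, s ^ i) * t ^ j
        + (s * t) ^ N * ((∑ i ∈ range j, s ^ i) * t ^ j) := by
    intro j _
    simp only [sum_range_add, pow_add, ← mul_sum, mul_pow]
    ring
  rw [S2_eq_sum_geom_sum_mul, two_mul, sum_range_add, sum_congr rfl hshift, sum_add_distrib,
    ← mul_sum, ← mul_sum, ← S2_eq_sum_geom_sum_mul]
  ring

theorem two_pow_dvd_S2_two_pow_succ_sub {s t : ℤ} {c : ℕ} (hs : Odd s) (ht : Odd t)
    (hsc : (2 : ℤ) ^ c ∣ s + 1) (htc : (2 : ℤ) ^ c ∣ t - 1) (k : ℕ) :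
    (2 : ℤ) ^ (k + c) ∣ S2 s t (2 ^ (k + 1)) - 2 ^ k := by
  have hst : Odd (s * t) := hs.mul ht
  have hstc : (2 : ℤ) ^ c ∣ s * t + 1 := by
    rw [show s * t + 1 = t * (s + 1) - (t - 1) by ring]
    exact dvd_sub (hsc.mul_left t) htc
  induction k with
  | zero => simpa [S2, sum_range_succ] using htc
  | succ k ih =>
    set N := 2 ^ (k + 1)
    have hsplit : S2 s t (2 ^ (k + 1 + 1)) - 2 ^ (k + 1) =
        (1 + (s * t) ^ N) * (S2 s t N - 2 ^ k) + 2 ^ k * ((s * t) ^ N - 1)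
          + t ^ N * ((∑ i ∈ range N, s ^ i) * ∑ j ∈ range N, t ^ j) := by
      rw [pow_succ' 2 (k + 1), S2_two_mul]
      ring
    have hfirst : (2 : ℤ) ^ (k + 1 + c) ∣ (1 + (s * t) ^ N) * (S2 s t N - 2 ^ k) := by
      rw [add_right_comm, pow_succ', add_comm 1]
      exact mul_dvd_mul hst.pow.add_one.two_dvd ih
    have hsecond : (2 : ℤ) ^ (k + 1 + c) ∣ 2 ^ k * ((s * t) ^ N - 1) := by
      rw [add_assoc, add_comm 1, pow_add]
      exact mul_dvd_mul_left _ (two_pow_succ_dvd_pow_two_pow_succ_sub_one hst hstc k)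
    have hthird : (2 : ℤ) ^ (k + 1 + c) ∣
        t ^ N * ((∑ i ∈ range N, s ^ i) * ∑ j ∈ range N, t ^ j) := by
      rw [add_right_comm, pow_succ, add_comm k]
      exact dvd_mul_of_dvd_right (mul_dvd_mul (two_pow_add_dvd_geom_sum_two_pow_succ hs hsc k)
        ((dvd_pow_self 2 k.succ_ne_zero).trans (two_pow_dvd_geom_sum_two_pow ht (k + 1)))) _
    rw [hsplit]
    exact dvd_add (dvd_add hfirst hsecond) hthird

theorem stmt13_general (m : ℕ) (s₁ s₂ : ℤ)
    (hs₁ : (4 : ℤ) ∣ s₁ + 1) (hs₂ : Odd s₂) (n : ℕ) (hn : 0 < n)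
    (h : max ((m : ℕ∞) - emultiplicity (2 : ℤ) (s₁ + 1))
           ((m : ℕ∞) - emultiplicity (2 : ℤ) (s₂ - 1)) ≤ (n : ℕ∞) - 1) :
    S2 s₁ s₂ (2 ^ n) ≡ 2 ^ (n - 1) [ZMOD (2 : ℤ) ^ m] := by
  obtain ⟨k, rfl⟩ : ∃ k, n = k + 1 := Nat.exists_eq_add_one.mpr hn
  rw [show ((k + 1 : ℕ) : ℕ∞) - 1 = k by exact_mod_cast ENat.natCast_sub (k + 1) 1, max_le_iff] at h
  have hodd₁ : Odd s₁ := by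
    obtain ⟨r, hr⟩ := hs₁
    exact ⟨2 * r - 1, by omega⟩
  have hkey := two_pow_dvd_S2_two_pow_succ_sub hodd₁ hs₂
    (pow_tsub_dvd_of_tsub_emultiplicity_le h.1) (pow_tsub_dvd_of_tsub_emultiplicity_le h.2) k
  exact Int.modEq_iff_dvd.mpr ((pow_dvd_pow 2 (by omega)).trans hkey) |>.symm

/-- With `o₁ = max(0, m - v₂(s₁+1))` and `o₂ = max(0, m - v₂(s₂-1))` encoded via
truncated subtraction in `ℕ∞` (so that `v₂(0) = ∞` is allowed), if
`max(o₁,o₂) ≤ n-1` then `S_{s₁,s₂}(2^n) ≡ 2^{n-1} (mod 2^m)`. -/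
theorem stmt13 (m : ℕ) (hm : 0 < m) (s₁ s₂ : ℤ)
    (hs₁ : (4 : ℤ) ∣ s₁ + 1) (hs₂ : Odd s₂) (n : ℕ) (hn : 0 < n)
    (h : max ((m : ℕ∞) - emultiplicity (2 : ℤ) (s₁ + 1))
           ((m : ℕ∞) - emultiplicity (2 : ℤ) (s₂ - 1)) ≤ (n : ℕ∞) - 1) :
    S2 s₁ s₂ (2 ^ n) ≡ 2 ^ (n - 1) [ZMOD (2 : ℤ) ^ m] :=
  stmt13_general m s₁ s₂ hs₁ hs₂ n hn h
end
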